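/- arXiv:1908.01177 — 4 statements merged into one kernel-verified Lean document; each statement's English description precedes it below -/
import Mathlib

section
/- Suppose (f,g) is a Chu transform witnessing (L,⊨,S) ≤ (L',⊨',S'), where both logics are closed under negation and binary conjunction with Tarski truth conditions (s ⊨ ¬φ iff not s ⊨ φ; s ⊨ φ∧ψ iff s ⊨ φ and s ⊨ ψ, and similarly for ⊨'). Then for every φ ∈ L, f(¬φ) is L'-equivalent to ¬f(φ) (i.e., for all s' ∈ S', s' ⊨' f(¬φ) iff s' ⊨' ¬f(φ)), and for all φ,ψ ∈ L, f(φ∧ψ) is L'-equivalent to f(φ)∧f(ψ). -/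
universe u

theorem chu_preserves_neg_and_conj_general
    {L S L' S' : Type u} (sat : S → L → Prop) (sat' : S' → L' → Prop)
    (f : L → L') (g : S' → S)
    (hadj : ∀ (φ : L) (s' : S'), sat' s' (f φ) ↔ sat (g s') φ)
    (negL : L → L) (negL' : L' → L')
    (conjL : L → L → L) (conjL' : L' → L' → L')
    (hnegL : ∀ (s : S) (φ : L), sat s (negL φ) ↔ ¬ sat s φ)
    (hnegL' : ∀ (s' : S') (φ' : L'), sat' s' (negL' φ') ↔ ¬ sat' s' φ')
    (hconjL : ∀ (s : S) (φ ψ : L), sat s (conjL φ ψ) ↔ sat s φ ∧ sat s ψ)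
    (hconjL' : ∀ (s' : S') (φ' ψ' : L'), sat' s' (conjL' φ' ψ') ↔ sat' s' φ' ∧ sat' s' ψ') :
    (∀ (φ : L) (s' : S'), sat' s' (f (negL φ)) ↔ sat' s' (negL' (f φ))) ∧
    (∀ (φ ψ : L) (s' : S'), sat' s' (f (conjL φ ψ)) ↔ sat' s' (conjL' (f φ) (f ψ))) :=
  ⟨fun φ s' => by rw [hadj, hnegL, hnegL', hadj],
   fun φ ψ s' => by rw [hadj, hconjL, hconjL', hadj, hadj]⟩

/-- If `(f,g)` is a Chu transform witnessing `(L,⊨,S) ≤ (L',⊨',S')` (adjointness plus density),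
and both logics have negation and binary conjunction obeying the Tarski truth conditions,
then `f` commutes with negation and conjunction up to `L'`-equivalence. -/
theorem chu_preserves_neg_and_conj
    {L S L' S' : Type u} (sat : S → L → Prop) (sat' : S' → L' → Prop)
    (f : L → L') (g : S' → S)
    (hadj : ∀ (φ : L) (s' : S'), sat' s' (f φ) ↔ sat (g s') φ)
    (hdense : ∀ φ : L, (∃ s, sat s φ) → ∃ s', sat (g s') φ)
    (negL : L → L) (negL' : L' → L')
    (conjL : L → L → L) (conjL' : L' → L' → L')
    (hnegL : ∀ (s : S) (φ : L), sat s (negL φ) ↔ ¬ sat s φ)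
    (hnegL' : ∀ (s' : S') (φ' : L'), sat' s' (negL' φ') ↔ ¬ sat' s' φ')
    (hconjL : ∀ (s : S) (φ ψ : L), sat s (conjL φ ψ) ↔ sat s φ ∧ sat s ψ)
    (hconjL' : ∀ (s' : S') (φ' ψ' : L'), sat' s' (conjL' φ' ψ') ↔ sat' s' φ' ∧ sat' s' ψ') :
    (∀ (φ : L) (s' : S'), sat' s' (f (negL φ)) ↔ sat' s' (negL' (f φ))) ∧
    (∀ (φ ψ : L) (s' : S'), sat' s' (f (conjL φ ψ)) ↔ sat' s' (conjL' (f φ) (f ψ))) :=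
  chu_preserves_neg_and_conj_general sat sat' f g hadj negL negL' conjL conjL' hnegL hnegL' hconjL
    hconjL'
end

section
/- If (L,⊨,S) ≤ (L',⊨',S') via a Chu transform (f,g) with dense g, both logics are closed under finite conjunctions with Tarski truth conditions, and (L',⊨',S') is compact (every finitely satisfiable set of L'-sentences is satisfiable in S'), then (L,⊨,S) is compact. -/
universe u

private lemma foldl_conj_sat {L S : Type u} (sat : S → L → Prop) (conjL : L → L → L)
    (hconjL : ∀ (s : S) (φ ψ : L), sat s (conjL φ ψ) ↔ sat s φ ∧ sat s ψ) :
    ∀ (l : List L) (a : L) (s : S),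
      sat s (l.foldl conjL a) ↔ sat s a ∧ ∀ φ ∈ l, sat s φ := by
  intro l
  induction l with
  | nil => simp
  | cons b l ih =>
    intro a s
    simp only [List.foldl_cons, ih, hconjL, List.mem_cons]
    constructor
    · rintro ⟨⟨h1, h2⟩, h3⟩
      exact ⟨h1, fun φ hφ => hφ.elim (fun h => h ▸ h2) (h3 φ)⟩
    · rintro ⟨h1, h2⟩
      exact ⟨⟨h1, h2 b (Or.inl rfl)⟩, fun φ hφ => h2 φ (Or.inr hφ)⟩

/-- If `(L,⊨,S) ≤ (L',⊨',S')` via a Chu transform `(f,g)` with dense `g`, both logics are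
closed under (binary, hence finite) conjunctions with the Tarski truth conditions, and
`(L',⊨',S')` is compact, then `(L,⊨,S)` is compact. -/
theorem chu_preserves_compactness
    {L S L' S' : Type u} (sat : S → L → Prop) (sat' : S' → L' → Prop)
    (f : L → L') (g : S' → S)
    (hadj : ∀ (φ : L) (s' : S'), sat' s' (f φ) ↔ sat (g s') φ)
    (hdense : ∀ φ : L, (∃ s, sat s φ) → ∃ s', sat (g s') φ)
    (conjL : L → L → L) (conjL' : L' → L' → L')
    (hconjL : ∀ (s : S) (φ ψ : L), sat s (conjL φ ψ) ↔ sat s φ ∧ sat s ψ)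
    (hconjL' : ∀ (s' : S') (φ' ψ' : L'), sat' s' (conjL' φ' ψ') ↔ sat' s' φ' ∧ sat' s' ψ')
    (hcompact : ∀ Sig' : Set L',
      (∀ Γ' : Finset L', ↑Γ' ⊆ Sig' → ∃ s', ∀ φ' ∈ Γ', sat' s' φ') →
      ∃ s', ∀ φ' ∈ Sig', sat' s' φ') :
    ∀ Sig : Set L,
      (∀ Γ : Finset L, ↑Γ ⊆ Sig → ∃ s, ∀ φ ∈ Γ, sat s φ) →
      ∃ s, ∀ φ ∈ Sig, sat s φ := by
  intro Sig hfin
  classical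
  rcases Set.eq_empty_or_nonempty Sig with hE | ⟨φ₀, hφ₀⟩
  · obtain ⟨s, _⟩ := hfin ∅ (by simp)
    exact ⟨s, by simp [hE]⟩
  -- S' is nonempty
  obtain ⟨s₁, hs₁⟩ := hfin {φ₀} (by simpa using hφ₀)
  obtain ⟨s'₀, _⟩ := hdense φ₀ ⟨s₁, hs₁ φ₀ (by simp)⟩
  -- apply compactness of L' to the image of Sig
  have key : ∀ Γ' : Finset L', ↑Γ' ⊆ f '' Sig → ∃ s', ∀ φ' ∈ Γ', sat' s' φ' := by
    intro Γ' hΓ'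
    -- choose preimages
    have hpre : ∀ φ' ∈ Γ', ∃ φ ∈ Sig, f φ = φ' := fun φ' h => hΓ' h
    choose p hp hfp using hpre
    rcases Γ'.eq_empty_or_nonempty with rfl | hne
    · exact ⟨s'₀, by simp⟩
    set l : List L := Γ'.attach.toList.map (fun x => p x.1 x.2) with hl
    have hlne : l ≠ [] := by
      simp [hl, Finset.toList_eq_nil, hne.ne_empty]
    obtain ⟨a, t, hat⟩ := List.exists_cons_of_ne_nil hlne
    -- l is satisfiable in S
    have hlsat : ∃ s, ∀ φ ∈ l, sat s φ := by
      obtain ⟨s, hs⟩ := hfin (Γ'.image (fun φ' => if h : φ' ∈ Γ' then p φ' h else φ₀))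
        (by
          intro x hx
          simp only [Finset.coe_image, Set.mem_image, Finset.mem_coe] at hx
          obtain ⟨φ', hφ', rfl⟩ := hx
          simp [hφ', hp])
      refine ⟨s, fun φ hφ => ?_⟩
      simp only [hl, List.mem_map, Finset.mem_toList, Finset.mem_attach, true_and,
        Subtype.exists] at hφ
      obtain ⟨φ', hφ', rfl⟩ := hφ
      exact hs _ (Finset.mem_image.mpr ⟨φ', hφ', by simp [hφ']⟩)
    -- fold into one sentence and use density
    obtain ⟨s, hs⟩ := hlsat
    obtain ⟨s'', hs''⟩ := hdense (t.foldl conjL a)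
      ⟨s, (foldl_conj_sat sat conjL hconjL t a s).mpr
        ⟨hs a (hat ▸ (List.mem_cons_self : a ∈ a :: t)), fun φ hφ => hs φ (hat ▸ List.mem_cons_of_mem a hφ)⟩⟩
    have hall : ∀ φ ∈ l, sat (g s'') φ := by
      rw [hat]
      have := (foldl_conj_sat sat conjL hconjL t a (g s'')).mp hs''
      intro φ hφ
      rcases List.mem_cons.mp hφ with rfl | h
      · exact this.1
      · exact this.2 φ h
    refine ⟨s'', fun φ' hφ' => ?_⟩
    rw [← hfp φ' hφ', hadj]
    exact hall _ (by
      simp only [hl, List.mem_map]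
      exact ⟨⟨φ', hφ'⟩, by simp, rfl⟩)
  obtain ⟨s', hs'⟩ := hcompact (f '' Sig) key
  exact ⟨g s', fun φ hφ => (hadj φ s').mp (hs' (f φ) ⟨φ, hφ, rfl⟩)⟩
end

section
/- Let (f,g) be a Chu transform witnessing (L,⊨,S) ≤ (L',⊨',S') with dense g, suppose both L and L' are closed under conjunctions of fewer than λ sentences, ⊨ and ⊨' satisfy the Tarski truth conditions for such conjunctions, and f preserves conjunctions of size < λ up to L'-equivalence. Then for any cardinal θ, if (L',⊨',S') is (θ,λ)-compact, so is (L,⊨,S). -/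
/-!
Given a set `Σ` of `L`-sentences of size at most `θ` all of whose `< λ`-subsets are satisfiable,
its image `f '' Σ` has the same property: a `< λ`-subset of `f '' Σ` is the image of an equally
small `Γ ⊆ Σ`; the conjunction of `Γ` has a model, by density one of the form `g s'`, and then
`s' ⊨' f φ` for every `φ ∈ Γ` by the Chu adjunction. Compactness of `L'` gives a model `s'` of
`f '' Σ`, and `g s'` is a model of `Σ`.
-/

universe u

open Cardinal

namespace ChuTransform

variable {L S L' S' : Type u}

def Satisfiable (sat : S → L → Prop) (Γ : Set L) : Prop :=
  ∃ s, ∀ φ ∈ Γ, sat s φ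

def IsThetaLambdaCompact (sat : S → L → Prop) (θ lam : Cardinal.{u}) : Prop :=
  ∀ Sig : Set L, #Sig ≤ θ → (∀ Γ ⊆ Sig, #Γ < lam → Satisfiable sat Γ) → Satisfiable sat Sig

variable {sat : S → L → Prop} {sat' : S' → L' → Prop} {f : L → L'} {g : S' → S}

theorem satisfiable_of_satisfiable_image (hadj : ∀ φ s', sat' s' (f φ) ↔ sat (g s') φ)
    {Γ : Set L} (h : Satisfiable sat' (f '' Γ)) : Satisfiable sat Γ :=
  let ⟨s', hs'⟩ := h
  ⟨g s', fun φ hφ => (hadj φ s').mp (hs' _ (Set.mem_image_of_mem f hφ))⟩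

theorem satisfiable_image_of_isConj (hadj : ∀ φ s', sat' s' (f φ) ↔ sat (g s') φ)
    (hdense : ∀ φ : L, (∃ s, sat s φ) → ∃ s', sat (g s') φ)
    {Γ : Set L} {ψ : L} (hψ : ∀ s, sat s ψ ↔ ∀ φ ∈ Γ, sat s φ)
    (h : Satisfiable sat Γ) : Satisfiable sat' (f '' Γ) := by
  obtain ⟨s, hs⟩ := h
  obtain ⟨s', hs'⟩ := hdense ψ ⟨s, (hψ s).mpr hs⟩
  refine ⟨s', ?_⟩
  rintro _ ⟨φ, hφ, rfl⟩
  exact (hadj φ s').mpr ((hψ (g s')).mp hs' φ hφ)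

theorem exists_subset_image_eq_of_subset_image {Γ' : Set L'} {Sig : Set L} (h : Γ' ⊆ f '' Sig) :
    ∃ Γ ⊆ Sig, f '' Γ = Γ' ∧ #Γ = #Γ' := by
  obtain ⟨Γ, hΓ, hbij⟩ := Set.SurjOn.exists_bijOn_subset h
  exact ⟨Γ, hΓ, hbij.image_eq, hbij.image_eq ▸ (mk_image_eq_of_injOn f Γ hbij.injOn).symm⟩

theorem IsThetaLambdaCompact.of_chu (hadj : ∀ φ s', sat' s' (f φ) ↔ sat (g s') φ)
    (hdense : ∀ φ : L, (∃ s, sat s φ) → ∃ s', sat (g s') φ) {lam θ : Cardinal.{u}}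
    (conjL : Set L → L) (hconjL : ∀ Φ : Set L, #Φ < lam → ∀ s, sat s (conjL Φ) ↔ ∀ φ ∈ Φ, sat s φ)
    (h : IsThetaLambdaCompact sat' θ lam) : IsThetaLambdaCompact sat θ lam := by
  intro Sig hSig hsmall
  refine satisfiable_of_satisfiable_image hadj (h _ (mk_image_le.trans hSig) ?_)
  intro Γ' hΓ' hcard
  obtain ⟨Γ, hΓSig, rfl, hΓcard⟩ := exists_subset_image_eq_of_subset_image hΓ'
  rw [← hΓcard] at hcard
  exact satisfiable_image_of_isConj hadj hdense (hconjL Γ hcard) (hsmall Γ hΓSig hcard)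

end ChuTransform

theorem chu_preserves_theta_lambda_compactness_general
    {L S L' S' : Type u} (sat : S → L → Prop) (sat' : S' → L' → Prop)
    (lam : Cardinal.{u})
    (f : L → L') (g : S' → S)
    (hadj : ∀ (φ : L) (s' : S'), sat' s' (f φ) ↔ sat (g s') φ)
    (hdense : ∀ φ : L, (∃ s, sat s φ) → ∃ s', sat (g s') φ)
    (conjL : Set L → L)
    (hconjL : ∀ Φ : Set L, #Φ < lam → ∀ s, sat s (conjL Φ) ↔ ∀ φ ∈ Φ, sat s φ) :
    ∀ θ : Cardinal.{u},
      (∀ Sig' : Set L', #Sig' ≤ θ →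
        (∀ Γ' ⊆ Sig', #Γ' < lam → ∃ s', ∀ φ' ∈ Γ', sat' s' φ') →
        ∃ s', ∀ φ' ∈ Sig', sat' s' φ') →
      (∀ Sig : Set L, #Sig ≤ θ →
        (∀ Γ ⊆ Sig, #Γ < lam → ∃ s, ∀ φ ∈ Γ, sat s φ) →
        ∃ s, ∀ φ ∈ Sig, sat s φ) :=
  fun _ => ChuTransform.IsThetaLambdaCompact.of_chu hadj hdense conjL hconjL

/-- Chu transforms with dense second component preserve `(θ,λ)`-compactness downwards,
provided both logics are closed under conjunctions of `< λ` sentences with Tarski semantics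
and `f` preserves such conjunctions up to `L'`-equivalence. -/
theorem chu_preserves_theta_lambda_compactness
    {L S L' S' : Type u} (sat : S → L → Prop) (sat' : S' → L' → Prop)
    (lam : Cardinal.{u})
    (f : L → L') (g : S' → S)
    (hadj : ∀ (φ : L) (s' : S'), sat' s' (f φ) ↔ sat (g s') φ)
    (hdense : ∀ φ : L, (∃ s, sat s φ) → ∃ s', sat (g s') φ)
    (conjL : Set L → L) (conjL' : Set L' → L')
    (hconjL : ∀ Φ : Set L, #Φ < lam → ∀ s, sat s (conjL Φ) ↔ ∀ φ ∈ Φ, sat s φ)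
    (hconjL' : ∀ Φ' : Set L', #Φ' < lam → ∀ s', sat' s' (conjL' Φ') ↔ ∀ φ' ∈ Φ', sat' s' φ')
    (hf : ∀ Φ : Set L, #Φ < lam →
      ∀ s', sat' s' (f (conjL Φ)) ↔ sat' s' (conjL' (f '' Φ))) :
    ∀ θ : Cardinal.{u},
      (∀ Sig' : Set L', #Sig' ≤ θ →
        (∀ Γ' ⊆ Sig', #Γ' < lam → ∃ s', ∀ φ' ∈ Γ', sat' s' φ') →
        ∃ s', ∀ φ' ∈ Sig', sat' s' φ') →
      (∀ Sig : Set L, #Sig ≤ θ →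
        (∀ Γ ⊆ Sig, #Γ < lam → ∃ s, ∀ φ ∈ Γ, sat s φ) →
        ∃ s, ∀ φ ∈ Sig, sat s φ) :=
  chu_preserves_theta_lambda_compactness_general sat sat' lam f g hadj hdense conjL hconjL
end

section
/- (Union Lemma for chain models.) Suppose for each m < ω we have a chain model (A^m_n)_{n<ω} with (A^m_n)_n ⊆ (A^{m+1}_n)_n for all m (meaning ⋃_n A^m_n ⊆ ⋃_n A^{m+1}_n and every A^m_n is contained in some A^{m+1}_k), and that each inclusion is L^c_{κ,κ}-elementary: for every bounded tuple ā in (A^m_n)_n and every formula φ, (A^m_n)_n ⊨^c φ(ā) iff (A^{m+1}_n)_n ⊨^c φ(ā). Define the union chain model by A^ω_n = ⋃_{m ≤ n} A^m_n. Then for every m, the chain model (A^m_n)_n is an L^c_{κ,κ}-elementary submodel of (A^ω_n)_n. -/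
/-!
Level `N` of the union chain `A^ω` is a finite union of sets each contained in a level of `A N`.
Hence a tuple bounded in `A^ω`, together with a tuple bounded in `A m`, is bounded in a single
chain `A M` with `m ≤ M`. By induction on formulas, an existential witness found in `A^ω` then
lives in `A M`, and elementarity of `A m ≼ A M` pulls the existential statement back to `A m`;
universal quantifiers are dual.
-/

open Cardinal Set

inductive IFormula (τ : Type) (ar : τ → Type) : Type → Type 1 where
  | rel {α : Type} (R : τ) (t : ar R → α) : IFormula τ ar α
  | not {α : Type} (φ : IFormula τ ar α) : IFormula τ ar α
  | iAll {α : Type} (ι : Type) (f : ι → IFormula τ ar α) : IFormula τ ar α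
  | iEx {α : Type} (ι : Type) (f : ι → IFormula τ ar α) : IFormula τ ar α
  | ex {α : Type} (β : Type) (φ : IFormula τ ar (α ⊕ β)) : IFormula τ ar α
  | all {α : Type} (β : Type) (φ : IFormula τ ar (α ⊕ β)) : IFormula τ ar α

variable {τ : Type} {ar : τ → Type}

def ChainRealize {M : Type} (i : ∀ R, (ar R → M) → Prop) (c : ℕ → Set M) :
    ∀ {α : Type}, IFormula τ ar α → (α → M) → Prop
  | _, .rel R t, v => i R (fun j => v (t j))
  | _, .not φ, v => ¬ ChainRealize i c φ v
  | _, .iAll _ f, v => ∀ j, ChainRealize i c (f j) v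
  | _, .iEx _ f, v => ∃ j, ChainRealize i c (f j) v
  | _, .ex _ φ, v => ∃ (n : ℕ) (b : _ → M), (∀ j, b j ∈ c n) ∧ ChainRealize i c φ (Sum.elim v b)
  | _, .all _ φ, v => ∀ (n : ℕ) (b : _ → M), (∀ j, b j ∈ c n) → ChainRealize i c φ (Sum.elim v b)

def SmallForm (lam th : Cardinal.{0}) : ∀ {α : Type}, IFormula τ ar α → Prop
  | _, .rel _ _ => True
  | _, .not φ => SmallForm lam th φ
  | _, .iAll ι f => #ι < lam ∧ ∀ j, SmallForm lam th (f j)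
  | _, .iEx ι f => #ι < lam ∧ ∀ j, SmallForm lam th (f j)
  | _, .ex β φ => #β < th ∧ SmallForm lam th φ
  | _, .all β φ => #β < th ∧ SmallForm lam th φ

theorem chainRealize_all_iff_not_ex_not {M : Type} (i : ∀ R, (ar R → M) → Prop)
    (c : ℕ → Set M) {α β : Type} (φ : IFormula τ ar (α ⊕ β)) (v : α → M) :
    ChainRealize i c (.all β φ) v ↔ ¬ ChainRealize i c (.ex β (.not φ)) v := by
  simp only [ChainRealize, not_exists, not_and, not_not]

section Chains

variable {U : Type} {κ : Cardinal.{0}} {i : ∀ R, (ar R → U) → Prop}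

def ChainBounded {α : Type} (c : ℕ → Set U) (v : α → U) : Prop :=
  ∃ n, ∀ j, v j ∈ c n

def ChainLE (c d : ℕ → Set U) : Prop :=
  ∀ n, ∃ k, c n ⊆ d k

theorem ChainLE.refl (c : ℕ → Set U) : ChainLE c c :=
  fun n => ⟨n, subset_rfl⟩

theorem ChainLE.trans {c d e : ℕ → Set U} (hcd : ChainLE c d) (hde : ChainLE d e) :
    ChainLE c e := fun n =>
  let ⟨k, hk⟩ := hcd n
  let ⟨l, hl⟩ := hde k
  ⟨l, hk.trans hl⟩

theorem ChainBounded.of_chainLE {α : Type} {c d : ℕ → Set U} {v : α → U}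
    (hv : ChainBounded c v) (hcd : ChainLE c d) : ChainBounded d v :=
  let ⟨n, hn⟩ := hv
  let ⟨k, hk⟩ := hcd n
  ⟨k, fun j => hk (hn j)⟩

theorem ChainBounded.sumElim {α β : Type} {c : ℕ → Set U} {v : α → U} {w : β → U}
    (hv : ChainBounded c v) (hc : Monotone c) (hw : ChainBounded c w) :
    ChainBounded c (Sum.elim v w) := by
  obtain ⟨n, hn⟩ := hv
  obtain ⟨k, hk⟩ := hw
  refine ⟨max n k, ?_⟩
  rintro (j | j)
  · exact hc (le_max_left n k) (hn j)
  · exact hc (le_max_right n k) (hk j)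

variable (κ i) in
def ChainElementary (c d : ℕ → Set U) : Prop :=
  ∀ {α : Type} (φ : IFormula τ ar α) (v : α → U),
    SmallForm κ κ φ → ChainBounded c v → (ChainRealize i c φ v ↔ ChainRealize i d φ v)

variable (κ i) in
def ChainElementarySubmodel (c d : ℕ → Set U) : Prop :=
  ChainLE c d ∧ ChainElementary κ i c d

theorem ChainElementarySubmodel.refl (c : ℕ → Set U) : ChainElementarySubmodel κ i c c :=
  ⟨.refl c, fun _ _ _ _ => Iff.rfl⟩

theorem ChainElementarySubmodel.trans {c d e : ℕ → Set U}
    (hcd : ChainElementarySubmodel κ i c d) (hde : ChainElementarySubmodel κ i d e) :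
    ChainElementarySubmodel κ i c e :=
  ⟨hcd.1.trans hde.1, fun φ v hφ hv =>
    (hcd.2 φ v hφ hv).trans (hde.2 φ v hφ (hv.of_chainLE hcd.1))⟩

theorem chainElementarySubmodel_of_le {A : ℕ → ℕ → Set U}
    (hA : ∀ m, ChainElementarySubmodel κ i (A m) (A (m + 1))) {m M : ℕ} (hmM : m ≤ M) :
    ChainElementarySubmodel κ i (A m) (A M) := by
  induction hmM with
  | refl => exact .refl _
  | step _ ih => exact ih.trans (hA _)

variable (κ i) in
structure IsElementaryUnion (A : ℕ → ℕ → Set U) (B : ℕ → Set U) : Prop where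
  monotone : ∀ m, Monotone (A m)
  submodel_of_le : ∀ ⦃m M⦄, m ≤ M → ChainElementarySubmodel κ i (A m) (A M)
  le_union : ∀ m, ChainLE (A m) B
  exists_subset : ∀ N, ∃ M K, B N ⊆ A M K

namespace IsElementaryUnion

variable {A : ℕ → ℕ → Set U} {B : ℕ → Set U}

theorem exists_bounded_sumElim (h : IsElementaryUnion κ i A B) {m : ℕ} {α β : Type}
    {v : α → U} {b : β → U} (hv : ChainBounded (A m) v) (hb : ChainBounded B b) :
    ∃ M, m ≤ M ∧ ChainBounded (A M) (Sum.elim v b) := by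
  obtain ⟨N, hbN⟩ := hb
  obtain ⟨M₀, K, hNK⟩ := h.exists_subset N
  have hbM₀ : ChainBounded (A M₀) b := ⟨K, fun j => hNK (hbN j)⟩
  exact ⟨max m M₀, le_max_left m M₀,
    (hv.of_chainLE (h.submodel_of_le (le_max_left m M₀)).1).sumElim (h.monotone _)
      (hbM₀.of_chainLE (h.submodel_of_le (le_max_right m M₀)).1)⟩

theorem realize_ex_iff (h : IsElementaryUnion κ i A B) {m : ℕ} {α β : Type}
    {ψ : IFormula τ ar (α ⊕ β)} {v : α → U}
    (ih : ∀ M (w : α ⊕ β → U), ChainBounded (A M) w →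
      (ChainRealize i (A M) ψ w ↔ ChainRealize i B ψ w))
    (hs : SmallForm κ κ (.ex β ψ)) (hv : ChainBounded (A m) v) :
    ChainRealize i (A m) (.ex β ψ) v ↔ ChainRealize i B (.ex β ψ) v := by
  constructor
  · rintro ⟨n, b, hb, hψ⟩
    obtain ⟨N, hN⟩ := h.le_union m n
    exact ⟨N, b, fun j => hN (hb j), (ih m _ (hv.sumElim (h.monotone m) ⟨n, hb⟩)).1 hψ⟩
  · rintro ⟨N, b, hb, hψ⟩
    obtain ⟨M, hmM, K, hK⟩ := h.exists_bounded_sumElim hv ⟨N, hb⟩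
    have hexM : ChainRealize i (A M) (.ex β ψ) v :=
      ⟨K, b, fun j => hK (.inr j), (ih M _ ⟨K, hK⟩).2 hψ⟩
    exact ((h.submodel_of_le hmM).2 _ v hs hv).2 hexM

theorem chainElementary (h : IsElementaryUnion κ i A B) (m : ℕ) :
    ChainElementary κ i (A m) B := by
  intro α φ
  revert m
  induction φ with
  | rel R t => exact fun _ _ _ _ => Iff.rfl
  | not φ ih => exact fun m v hs hv => not_congr (ih m v hs hv)
  | iAll ι f ih => exact fun m v hs hv => forall_congr' fun j => ih j m v (hs.2 j) hv
  | iEx ι f ih => exact fun m v hs hv => exists_congr fun j => ih j m v (hs.2 j) hv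
  | ex β ψ ih => exact fun m v hs hv => h.realize_ex_iff (fun M w => ih M w hs.2) hs hv
  | all β ψ ih =>
    intro m v hs hv
    simp only [chainRealize_all_iff_not_ex_not]
    exact not_congr (h.realize_ex_iff (fun M w hw => not_congr (ih M w hs.2 hw)) hs hv)

end IsElementaryUnion

def unionChain (A : ℕ → ℕ → Set U) (n : ℕ) : Set U :=
  ⋃ m ∈ Finset.range (n + 1), A m n

theorem chainLE_unionChain {A : ℕ → ℕ → Set U} {m : ℕ} (hA : Monotone (A m)) :
    ChainLE (A m) (unionChain A) := fun n =>
  ⟨max m n, fun _ hx =>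
    mem_iUnion₂_of_mem (Finset.mem_range.2 (Nat.lt_succ_of_le (le_max_left m n)))
      (hA (le_max_right m n) hx)⟩

theorem exists_unionChain_subset {A : ℕ → ℕ → Set U} {N : ℕ} (hA : Monotone (A N))
    (hle : ∀ m ≤ N, ChainLE (A m) (A N)) : ∃ K, unionChain A N ⊆ A N K := by
  have hk : ∀ m, ∃ k, m ≤ N → A m N ⊆ A N k := fun m =>
    if hm : m ≤ N then (hle m hm N).imp fun _ hk _ => hk else ⟨0, fun h => absurd h hm⟩
  choose k hk using hk
  refine ⟨(Finset.range (N + 1)).sup k, iUnion₂_subset fun m hm => ?_⟩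
  exact (hk m (Nat.lt_succ_iff.1 (Finset.mem_range.1 hm))).trans (hA (Finset.le_sup hm))

end Chains

/-- The Union Lemma for chain models: if `(A m)` is an `⊆`-increasing sequence of chain
models (over a common relational ambient structure) each of which is an `L^c_{κ,κ}`-elementary
submodel of the next, then each `(A m)` is an `L^c_{κ,κ}`-elementary submodel of the union
chain model `A^ω` given by `A^ω n = ⋃_{m ≤ n} A m n`. -/
theorem chain_union_lemma
    (κ : Cardinal.{0})
    (U : Type) (i : ∀ R, (ar R → U) → Prop)
    (A : ℕ → ℕ → Set U)
    (hmono : ∀ m, Monotone (A m))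
    (hsub : ∀ m n, ∃ k, A m n ⊆ A (m + 1) k)
    (helem : ∀ (m : ℕ) {α : Type} (φ : IFormula τ ar α) (v : α → U),
      SmallForm κ κ φ → (∃ n, ∀ j, v j ∈ A m n) →
      (ChainRealize i (A m) φ v ↔ ChainRealize i (A (m + 1)) φ v)) :
    ∀ (m : ℕ) {α : Type} (φ : IFormula τ ar α) (v : α → U),
      SmallForm κ κ φ → (∃ n, ∀ j, v j ∈ A m n) →
      (ChainRealize i (A m) φ v ↔
        ChainRealize i (fun n => ⋃ m' ∈ Finset.range (n + 1), A m' n) φ v) := by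
  have hstep : ∀ m, ChainElementarySubmodel κ i (A m) (A (m + 1)) :=
    fun m => ⟨hsub m, helem m⟩
  have hunion : IsElementaryUnion κ i A (unionChain A) :=
    { monotone := hmono
      submodel_of_le := fun _ _ => chainElementarySubmodel_of_le hstep
      le_union := fun m => chainLE_unionChain (hmono m)
      exists_subset := fun N => ⟨N, exists_unionChain_subset (hmono N)
        fun _ hm => (chainElementarySubmodel_of_le hstep hm).1⟩ }
  exact fun m => hunion.chainElementary m
end
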